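/- arXiv:2511.10356 — 5 statements merged into one kernel-verified Lean document; each statement's English description precedes it below -/
import Mathlib

section
/- Let E be a finite-dimensional real inner product space, let f, h : E → ℝ with f convex on E, h convex on E, f differentiable everywhere, and suppose the gradient of f is Lipschitz continuous with constant L > 0. Let t be a step size with 0 < t ≤ 1/L, let x₀ ∈ E, and let (xₖ) be a sequence with x 0 = x₀ such that for every k, x(k+1) is a global minimizer of the function u ↦ t·h(u) + (1/2)·‖u − (xₖ − t·∇f(xₖ))‖². Then for every positive integer k and every point xm ∈ E, (f + h)(xₖ) − (f + h)(xm) ≤ (1/(2·k·t))·‖x₀ − xm‖². -/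
open InnerProductSpace

section PGaux
variable {E : Type*} [NormedAddCommGroup E] [InnerProductSpace ℝ E] [CompleteSpace E]

lemma pg_hasDerivAt (f : E → ℝ) (hdiff : Differentiable ℝ f) (c d : E) (s : ℝ) :
    HasDerivAt (fun s : ℝ => f (c + s • d)) (inner ℝ (gradient f (c + s • d)) d) s := by
  have h1 : HasDerivAt (fun s : ℝ => c + s • d) d s := by
    simpa using ((hasDerivAt_id s).smul_const d).const_add c
  have h2 := (hdiff (c + s • d)).hasGradientAt.hasFDerivAt
  have := h2.comp_hasDerivAt s h1
  simp at this ⊢; exact this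

lemma pg_limit {c A : ℝ} (hA : 0 ≤ A) (h : ∀ l : ℝ, 0 < l → l ≤ 1 → 0 ≤ c + l * A) : 0 ≤ c := by
  by_contra hc
  push_neg at hc
  rcases le_or_gt A 0 with h0 | h0
  · have := h 1 one_pos le_rfl; nlinarith
  · have hl1 : (0:ℝ) < -c / (2 * A) := div_pos (by linarith) (by linarith)
    set l := min 1 (-c / (2 * A)) with hl
    have hl0 : 0 < l := lt_min one_pos hl1
    have := h l hl0 (min_le_left _ _)
    have h2 : l * A ≤ (-c / (2 * A)) * A :=
      mul_le_mul_of_nonneg_right (min_le_right _ _) hA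
    have h3 : (-c / (2 * A)) * A = -c / 2 := by field_simp
    nlinarith

lemma pg_descent (f : E → ℝ) (L : ℝ) (hL : 0 < L) (hdiff : Differentiable ℝ f)
    (hlip : ∀ u v : E, ‖gradient f u - gradient f v‖ ≤ L * ‖u - v‖) (x y : E) :
    f y ≤ f x + inner ℝ (gradient f x) (y - x) + L / 2 * ‖y - x‖ ^ 2 := by
  set d := y - x with hd
  set g : ℝ → ℝ := fun s => inner ℝ (gradient f (x + s • d)) d with hg
  have hderiv : ∀ s ∈ Set.uIcc (0:ℝ) 1, HasDerivAt (fun s : ℝ => f (x + s • d)) (g s) s :=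
    fun s _ => pg_hasDerivAt f hdiff x d s
  have key : ∀ a b : ℝ, g a - g b ≤ L * ‖d‖ ^ 2 * |a - b| := by
    intro a b
    have h1 : g a - g b = inner ℝ (gradient f (x + a • d) - gradient f (x + b • d)) d := by
      rw [inner_sub_left]
    rw [h1]
    calc (inner ℝ (gradient f (x + a • d) - gradient f (x + b • d)) d : ℝ)
        ≤ ‖gradient f (x + a • d) - gradient f (x + b • d)‖ * ‖d‖ := real_inner_le_norm _ _
      _ ≤ (L * ‖(x + a • d) - (x + b • d)‖) * ‖d‖ := by gcongr; exact hlip _ _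
      _ = L * ‖d‖ ^ 2 * |a - b| := by
          have : (x + a • d) - (x + b • d) = (a - b) • d := by
            rw [add_sub_add_left_eq_sub, ← sub_smul]
          rw [this, norm_smul, Real.norm_eq_abs]
          ring
  have hgc : Continuous g := by
    have hlg : LipschitzWith ⟨L * ‖d‖ ^ 2, by positivity⟩ g := by
      apply LipschitzWith.of_dist_le_mul
      intro a b
      rw [Real.dist_eq, Real.dist_eq, abs_sub_le_iff]
      exact ⟨key a b, by rw [abs_sub_comm]; exact key b a⟩
    exact hlg.continuous
  have hint : ∫ s in (0:ℝ)..1, g s = f (x + (1:ℝ) • d) - f (x + (0:ℝ) • d) :=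
    intervalIntegral.integral_eq_sub_of_hasDerivAt hderiv (hgc.intervalIntegrable 0 1)
  have hmono : ∫ s in (0:ℝ)..1, g s ≤ ∫ s in (0:ℝ)..1, (g 0 + L * ‖d‖^2 * s) := by
    apply intervalIntegral.integral_mono_on (by norm_num) (hgc.intervalIntegrable 0 1)
    · exact (continuous_const.add (continuous_const.mul continuous_id)).intervalIntegrable 0 1
    · intro s hs
      have h2 := key s 0
      rw [sub_zero, abs_of_nonneg hs.1] at h2
      linarith
  have hval : ∫ s in (0:ℝ)..1, (g 0 + L * ‖d‖^2 * s) = g 0 + L / 2 * ‖d‖ ^ 2 := by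
    have : ∫ s in (0:ℝ)..1, (g 0 + L * ‖d‖^2 * s) =
        (∫ s in (0:ℝ)..1, g 0) + ∫ s in (0:ℝ)..1, L * ‖d‖^2 * s :=
      intervalIntegral.integral_add intervalIntegrable_const
        (((continuous_const (y := L * ‖d‖^2)).mul continuous_id).intervalIntegrable 0 1)
    rw [this, intervalIntegral.integral_const_mul, integral_id, intervalIntegral.integral_const]
    simp
    ring
  have hg0 : g 0 = inner ℝ (gradient f x) d := by simp [hg]
  have hfin : f (x + (1:ℝ) • d) - f (x + (0:ℝ) • d) ≤ g 0 + L / 2 * ‖d‖ ^ 2 := by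
    rw [← hint, ← hval]; exact hmono
  simp only [one_smul, zero_smul, add_zero] at hfin
  have hxy : x + d = y := by rw [hd]; abel
  rw [hxy, hg0] at hfin
  linarith

lemma pg_support (f : E → ℝ) (hf : ConvexOn ℝ Set.univ f) (hdiff : Differentiable ℝ f)
    (x y : E) : (inner ℝ (gradient f x) (y - x) : ℝ) ≤ f y - f x := by
  set d := y - x with hd
  have hder := (pg_hasDerivAt f hdiff x d 0)
  rw [hasDerivAt_iff_tendsto_slope] at hder
  have hder' : Filter.Tendsto (slope (fun s : ℝ => f (x + s • d)) 0)
      (nhdsWithin 0 (Set.Ioi 0)) (nhds (inner ℝ (gradient f (x + (0:ℝ) • d)) d)) :=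
    hder.mono_left (nhdsWithin_mono 0 (fun s hs => ne_of_gt hs))
  simp only [zero_smul, add_zero] at hder'
  apply le_of_tendsto hder'
  filter_upwards [Ioc_mem_nhdsGT_of_mem (Set.left_mem_Ico.mpr one_pos)] with s hs
  rcases hs with ⟨hs0, hs1⟩
  rw [slope_def_field]
  have hconv := hf.2 (Set.mem_univ x) (Set.mem_univ y) (by linarith : (0:ℝ) ≤ 1 - s)
    (le_of_lt hs0) (by ring)
  have heq : (1 - s) • x + s • y = x + s • d := by rw [hd]; module
  rw [heq] at hconv
  simp only [smul_eq_mul] at hconv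
  simp only [zero_smul, add_zero, sub_zero]
  rw [div_le_iff₀ hs0]
  nlinarith

omit [CompleteSpace E] in
lemma pg_prox (h : E → ℝ) (hh : ConvexOn ℝ Set.univ h) (t : ℝ) (ht : 0 < t)
    (y p : E) (hmin : IsMinOn (fun u => t * h u + (1 / 2) * ‖u - y‖ ^ 2) Set.univ p)
    (u : E) : 0 ≤ t * (h u - h p) + inner ℝ (p - y) (u - p) := by
  apply pg_limit (c := t * (h u - h p) + inner ℝ (p - y) (u - p)) (A := (1/2) * ‖u - p‖ ^ 2)
    (by positivity)
  intro l hl0 hl1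
  have hmin' := hmin (Set.mem_univ (p + l • (u - p)))
  simp only [Set.mem_setOf_eq] at hmin'
  have hconv := hh.2 (Set.mem_univ p) (Set.mem_univ u) (by linarith : (0:ℝ) ≤ 1 - l)
    (le_of_lt hl0) (by ring)
  have heq : (1 - l) • p + l • u = p + l • (u - p) := by module
  rw [heq] at hconv
  simp only [smul_eq_mul] at hconv
  have hnorm : ‖(p + l • (u - p)) - y‖ ^ 2
      = ‖p - y‖ ^ 2 + 2 * l * inner ℝ (p - y) (u - p) + l ^ 2 * ‖u - p‖ ^ 2 := by
    have : (p + l • (u - p)) - y = (p - y) + l • (u - p) := by abel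
    rw [this, norm_add_sq_real, real_inner_smul_right, norm_smul, Real.norm_eq_abs,
      mul_pow, sq_abs]
    ring
  have hle : t * h (p + l • (u - p)) ≤ t * ((1 - l) * h p + l * h u) :=
    mul_le_mul_of_nonneg_left hconv (le_of_lt ht)
  nlinarith [hmin', hle, hnorm]

/-- one step of the proximal gradient method -/
lemma pg_step (f h : E → ℝ) (L : ℝ) (hL : 0 < L)
    (hf : ConvexOn ℝ Set.univ f) (hh : ConvexOn ℝ Set.univ h)
    (hdiff : Differentiable ℝ f)
    (hlip : ∀ u v : E, ‖gradient f u - gradient f v‖ ≤ L * ‖u - v‖)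
    (t : ℝ) (ht : 0 < t) (ht' : t ≤ 1 / L)
    (xk xp u : E)
    (hmin : IsMinOn (fun u => t * h u + (1 / 2) * ‖u - (xk - t • gradient f xk)‖ ^ 2)
      Set.univ xp) :
    f xp + h xp ≤ f u + h u + 1 / (2 * t) * (‖xk - u‖ ^ 2 - ‖xp - u‖ ^ 2) := by
  set g := gradient f xk with hgdef
  have hdes := pg_descent f L hL hdiff hlip xk xp
  have hsup := pg_support f hf hdiff xk u
  have hpro := pg_prox h hh t ht (xk - t • g) xp hmin u
  -- expand the prox inner product
  have hexp : (inner ℝ (xp - (xk - t • g)) (u - xp) : ℝ)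
      = inner ℝ (xp - xk) (u - xp) + t * inner ℝ g (u - xp) := by
    have : xp - (xk - t • g) = (xp - xk) + t • g := by abel
    rw [this, inner_add_left, real_inner_smul_left]
  rw [hexp] at hpro
  -- gradient inner products decomposition
  have hdecomp : (inner ℝ g (u - xk) : ℝ) = inner ℝ g (u - xp) + inner ℝ g (xp - xk) := by
    rw [← inner_add_right]
    congr 1
    abel
  -- norm identity
  have hnorm : ‖xk - u‖ ^ 2 - ‖xp - u‖ ^ 2
      = ‖xp - xk‖ ^ 2 + 2 * inner ℝ (xp - xk) (u - xp) := by
    have h1 : xk - u = (xp - u) - (xp - xk) := by abel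
    rw [h1, norm_sub_sq_real]
    have h2 : (inner ℝ (xp - u) (xp - xk) : ℝ) = - inner ℝ (xp - xk) (u - xp) := by
      rw [real_inner_comm, ← inner_neg_right]
      congr 1
      abel
    rw [h2]
    ring
  -- h bound from prox (divide by t)
  have hLt : L / 2 * ‖xp - xk‖ ^ 2 ≤ 1 / (2 * t) * ‖xp - xk‖ ^ 2 := by
    have h1 : L ≤ 1 / t := by
      rw [le_div_iff₀ ht]
      have := (le_div_iff₀ hL).mp ht'
      linarith
    have heq2 : (1:ℝ) / (2 * t) = (1 / t) / 2 := by field_simp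
    have h2 : L / 2 ≤ 1 / (2 * t) := by rw [heq2]; linarith
    nlinarith [sq_nonneg ‖xp - xk‖]
  have hprot : h xp ≤ h u + (1 / t) * inner ℝ (xp - xk) (u - xp) + inner ℝ g (u - xp) := by
    have h0 : 0 ≤ t * (h u - h xp) + ((inner ℝ (xp - xk) (u - xp) : ℝ) + t * inner ℝ g (u - xp)) := hpro
    have ht1 : (1 / t) * (t * (h u - h xp) + ((inner ℝ (xp - xk) (u - xp) : ℝ) + t * inner ℝ g (u - xp)))
        = (h u - h xp) + (1/t) * inner ℝ (xp - xk) (u - xp) + inner ℝ g (u - xp) := by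
      field_simp
      ring
    have hmul := mul_le_mul_of_nonneg_left h0 (le_of_lt (one_div_pos.mpr ht))
    rw [mul_zero, ht1] at hmul
    linarith
  rw [hnorm]
  have hsup' : f xk ≤ f u - inner ℝ g (u - xk) := by linarith
  rw [hdecomp] at hsup'
  have hdes' : f xp ≤ f xk + inner ℝ g (xp - xk) + L / 2 * ‖xp - xk‖ ^ 2 := hdes
  have final : f xp + h xp ≤ f u + h u + 1 / (2 * t) * ‖xp - xk‖ ^ 2
      + (1 / t) * inner ℝ (xp - xk) (u - xp) := by
    calc f xp + h xp ≤ (f xk + inner ℝ g (xp - xk) + L / 2 * ‖xp - xk‖ ^ 2)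
          + (h u + (1 / t) * inner ℝ (xp - xk) (u - xp) + inner ℝ g (u - xp)) := by
          linarith
      _ ≤ _ := by linarith
  have : 1 / (2 * t) * (‖xp - xk‖ ^ 2 + 2 * inner ℝ (xp - xk) (u - xp))
      = 1 / (2 * t) * ‖xp - xk‖ ^ 2 + (1 / t) * inner ℝ (xp - xk) (u - xp) := by
    field_simp
  rw [this]
  linarith

end PGaux
section Main
/-- Sublinear convergence of the proximal gradient method for a composite
convex problem `min f + h` on a finite-dimensional real inner product space. -/
theorem pg_method_converge
    {E : Type*} [NormedAddCommGroup E] [InnerProductSpace ℝ E] [FiniteDimensional ℝ E]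
    (f h : E → ℝ) (L : ℝ) (hL : 0 < L)
    (hf : ConvexOn ℝ Set.univ f) (hh : ConvexOn ℝ Set.univ h)
    (hdiff : Differentiable ℝ f)
    (hlip : ∀ u v : E, ‖gradient f u - gradient f v‖ ≤ L * ‖u - v‖)
    (t : ℝ) (ht : 0 < t) (ht' : t ≤ 1 / L)
    (x₀ : E) (x : ℕ → E) (hx0 : x 0 = x₀)
    (hupdate : ∀ k : ℕ,
      IsMinOn (fun u => t * h u + (1 / 2) * ‖u - (x k - t • gradient f (x k))‖ ^ 2)
        Set.univ (x (k + 1))) :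
    ∀ (k : ℕ+) (xm : E),
      (f + h) (x k) - (f + h) xm ≤ 1 / (2 * (k : ℝ) * t) * ‖x₀ - xm‖ ^ 2 := by
  intro k xm
  set F : E → ℝ := fun z => f z + h z with hF
  have key0 : ∀ (n : ℕ) (u : E),
      F (x (n + 1)) ≤ F u + 1 / (2 * t) * (‖x n - u‖ ^ 2 - ‖x (n+1) - u‖ ^ 2) := by
    intro n u
    rw [hF]
    exact pg_step f h L hL hf hh hdiff hlip t ht ht' (x n) (x (n+1)) u (hupdate n)
  clear_value F
  have key := key0
  have hmono : ∀ n : ℕ, F (x (n + 1)) ≤ F (x n) := by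
    intro n
    have := key n (x n)
    have h2 : (0:ℝ) ≤ ‖x (n+1) - x n‖ ^ 2 := by positivity
    have h3 : 0 < 1 / (2*t) := by positivity
    simp only [sub_self, norm_zero] at this
    norm_num at this
    have h4 : 0 ≤ t⁻¹ * (1 / 2) * ‖x (n + 1) - x n‖ ^ 2 := by positivity
    linarith
  have hanti : ∀ i j : ℕ, i ≤ j → F (x j) ≤ F (x i) := by
    intro i j hij
    induction j with
    | zero => simp_all
    | succ n ih =>
      rcases Nat.lt_or_ge i (n+1) with h1 | h1
      · exact le_trans (hmono n) (ih (Nat.lt_succ_iff.mp h1))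
      · have : i = n + 1 := le_antisymm hij h1
        rw [this]
  have htel : ∀ n : ℕ, (∑ i ∈ Finset.range n, (F (x (i+1)) - F xm))
      ≤ 1 / (2*t) * (‖x 0 - xm‖ ^ 2 - ‖x n - xm‖ ^ 2) := by
    intro n
    induction n with
    | zero => simp
    | succ n ih =>
      rw [Finset.sum_range_succ]
      have := key n xm
      have : F (x (n+1)) - F xm ≤ 1 / (2*t) * (‖x n - xm‖^2 - ‖x (n+1) - xm‖^2) := by linarith
      calc (∑ i ∈ Finset.range n, (F (x (i+1)) - F xm)) + (F (x (n+1)) - F xm)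
          ≤ 1 / (2*t) * (‖x 0 - xm‖^2 - ‖x n - xm‖^2)
            + 1 / (2*t) * (‖x n - xm‖^2 - ‖x (n+1) - xm‖^2) := by linarith
        _ = 1 / (2*t) * (‖x 0 - xm‖^2 - ‖x (n+1) - xm‖^2) := by ring
  have hlow : ∀ n : ℕ, (n:ℝ) * (F (x n) - F xm) ≤ ∑ i ∈ Finset.range n, (F (x (i+1)) - F xm) := by
    intro n
    have : ∀ i ∈ Finset.range n, F (x n) - F xm ≤ F (x (i+1)) - F xm := by
      intro i hi
      have hin : i + 1 ≤ n := Finset.mem_range.mp hi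
      have := hanti (i+1) n hin
      linarith
    calc (n:ℝ) * (F (x n) - F xm) = ∑ _i ∈ Finset.range n, (F (x n) - F xm) := by
          rw [Finset.sum_const, Finset.card_range, nsmul_eq_mul]
      _ ≤ _ := Finset.sum_le_sum this
  have hk : (0:ℝ) < (k:ℝ) := by exact_mod_cast k.pos
  have hb : (k:ℝ) * (F (x k) - F xm) ≤ 1 / (2*t) * ‖x₀ - xm‖ ^ 2 := by
    have h1 := hlow k
    have h2 := htel k
    have h3 : (0:ℝ) ≤ ‖x (k:ℕ) - xm‖ ^ 2 := by positivity
    have h4 : 0 < 1 / (2*t) := by positivity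
    rw [hx0] at h2
    nlinarith
  have hfin : F (x k) - F xm ≤ (1 / (2*t) * ‖x₀ - xm‖ ^ 2) / (k:ℝ) := by
    rw [le_div_iff₀ hk]
    nlinarith [hb]
  have heq : (1 / (2*t) * ‖x₀ - xm‖ ^ 2) / (k:ℝ) = 1 / (2 * (k:ℝ) * t) * ‖x₀ - xm‖ ^ 2 := by
    rw [div_eq_iff (ne_of_gt hk)]
    have h2t : (2:ℝ) * t ≠ 0 := by positivity
    have h2kt : (2:ℝ) * (k:ℝ) * t ≠ 0 := by positivity
    field_simp
  rw [heq] at hfin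
  simpa [hF] using hfin
end Main
end

section
/- Let E be a finite-dimensional real inner product space, let f, g : E → ℝ with f convex on E and differentiable everywhere, the gradient of f Lipschitz continuous with constant L > 0, and g convex on E. Consider Nesterov's first accelerated method with fixed step size t = 1/L and parameters γₖ = 2/(2+k): sequences (xₖ), (yₖ) with y 0 = x 0 = x₀, yₖ = xₖ + (γₖ·(1 − γ_{k−1})/γ_{k−1})·(xₖ − x_{k−1}) for k ≥ 1, and x(k+1) a global minimizer of u ↦ t·g(u) + (1/2)·‖u − (yₖ − t·∇f(yₖ))‖². If xm is a global minimizer of f + g on E, then for every natural number k, f(x(k+1)) + g(x(k+1)) − f(xm) − g(xm) ≤ (2·L/(k+2)²)·‖x₀ − xm‖². -/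
open Set InnerProductSpace intervalIntegral Filter
open scoped RealInnerProductSpace Topology

set_option linter.unusedSectionVars false

section NesterovAux
variable {E : Type*} [NormedAddCommGroup E] [InnerProductSpace ℝ E] [CompleteSpace E]
lemma nes_line_deriv (f : E → ℝ) (hdiff : Differentiable ℝ f) (a b : E) (s : ℝ) :
    HasDerivAt (fun r : ℝ => f (a + r • (b - a)))
      ⟪gradient f (a + s • (b - a)), b - a⟫ s := by
  have hc : HasDerivAt (fun r : ℝ => a + r • (b - a)) (b - a) s := by
    simpa using ((hasDerivAt_id s).smul_const (b - a)).const_add a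
  have hg : HasFDerivAt f (toDual ℝ E (gradient f (a + s • (b - a)))) (a + s • (b - a)) :=
    (hdiff _).hasGradientAt.hasFDerivAt
  have h := hg.comp_hasDerivAt s hc
  simpa [Function.comp_def] using h

/-- first-order condition for convexity -/

lemma nes_convex_ineq (f : E → ℝ) (hf : ConvexOn ℝ Set.univ f)
    (hdiff : Differentiable ℝ f) (y z : E) :
    f y + ⟪gradient f y, z - y⟫ ≤ f z := by
  set q : ℝ → ℝ := fun r => f (y + r • (z - y)) with hq
  have hconv : ConvexOn ℝ Set.univ q := by
    have := hf.comp_affineMap (AffineMap.lineMap y z : ℝ →ᵃ[ℝ] E)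
    simp only [Set.preimage_univ] at this
    refine (show q = f ∘ ⇑(AffineMap.lineMap y z) from ?_) ▸ this
    funext r
    simp [q, AffineMap.lineMap_apply, add_comm]
  have hd := nes_line_deriv f hdiff y z 0
  simp only [zero_smul, add_zero] at hd
  have := hconv.le_slope_of_hasDerivAt (Set.mem_univ (0:ℝ)) (Set.mem_univ (1:ℝ))
    one_pos hd
  rw [slope_def_field] at this
  have hq0 : q 0 = f y := by simp [q]
  have hq1 : q 1 = f z := by simp [q]
  rw [hq0, hq1] at this
  simp only [sub_zero, div_one] at this
  linarith

lemma nes_descent (f : E → ℝ) (hdiff : Differentiable ℝ f) (L : ℝ) (hL : 0 < L)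
    (hlip : ∀ u v : E, ‖gradient f u - gradient f v‖ ≤ L * ‖u - v‖) (a b : E) :
    f b ≤ f a + ⟪gradient f a, b - a⟫ + L / 2 * ‖b - a‖ ^ 2 := by
  set q' : ℝ → ℝ := fun s => ⟪gradient f (a + s • (b - a)), b - a⟫ with hq'
  have hderiv : ∀ s : ℝ, HasDerivAt (fun r : ℝ => f (a + r • (b - a))) (q' s) s :=
    fun s => nes_line_deriv f hdiff a b s
  have hgradcont : Continuous (gradient f) := by
    have : LipschitzWith (Real.toNNReal L) (gradient f) := by
      apply LipschitzWith.of_dist_le_mul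
      intro u v
      rw [dist_eq_norm, dist_eq_norm, Real.coe_toNNReal _ hL.le]
      exact hlip u v
    exact this.continuous
  have hcont : Continuous q' := by
    apply Continuous.inner
    · exact hgradcont.comp (by continuity)
    · exact continuous_const
  have hint : ∀ (c d : ℝ), IntervalIntegrable q' MeasureTheory.volume c d :=
    fun c d => hcont.intervalIntegrable c d
  have heq : f b - f a = ∫ s in (0:ℝ)..1, q' s := by
    have := integral_eq_sub_of_hasDerivAt (fun s _ => hderiv s) (hint 0 1)
    simp at this
    rw [this]
  have hmono : ∫ s in (0:ℝ)..1, q' s ≤ ∫ s in (0:ℝ)..1, (q' 0 + L * ‖b - a‖ ^ 2 * s) := by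
    apply integral_mono_on zero_le_one (hint 0 1)
    · apply Continuous.intervalIntegrable; continuity
    · intro s hs
      have h1 : q' s - q' 0 = ⟪gradient f (a + s • (b - a)) - gradient f a, b - a⟫ := by
        simp [q', inner_sub_left]
      have h2 : ⟪gradient f (a + s • (b - a)) - gradient f a, b - a⟫
          ≤ ‖gradient f (a + s • (b - a)) - gradient f a‖ * ‖b - a‖ :=
        real_inner_le_norm _ _
      have h3 : ‖gradient f (a + s • (b - a)) - gradient f a‖ ≤ L * (s * ‖b - a‖) := by
        have := hlip (a + s • (b - a)) a
        simpa [norm_smul, abs_of_nonneg hs.1] using this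
      nlinarith [norm_nonneg (b - a), hs.1]
  have hval : ∫ s in (0:ℝ)..1, (q' 0 + L * ‖b - a‖ ^ 2 * s)
      = q' 0 + L * ‖b - a‖ ^ 2 / 2 := by
    have e1 := integral_add (μ := MeasureTheory.volume) (a := (0:ℝ)) (b := (1:ℝ))
      (f := fun _ : ℝ => q' 0) (g := fun s : ℝ => L * ‖b - a‖ ^ 2 * s)
      intervalIntegrable_const ((continuous_const.mul continuous_id').intervalIntegrable 0 1)
    rw [e1, integral_const, integral_const_mul, integral_id]
    norm_num
    ring
  have hq0 : q' 0 = ⟪gradient f a, b - a⟫ := by simp [q']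
  rw [hval, hq0] at hmono
  linarith [heq, hmono]

lemma nes_quad_id (a b w : E) (θ : ℝ) :
    ‖(1 - θ) • a + θ • b - w‖ ^ 2
      = (1 - θ) * ‖a - w‖ ^ 2 + θ * ‖b - w‖ ^ 2 - θ * (1 - θ) * ‖b - a‖ ^ 2 := by
  have expand : ∀ v : E, ‖v‖ ^ 2 = ⟪v, v⟫ := fun v => (real_inner_self_eq_norm_sq v).symm
  simp only [expand]
  simp only [inner_sub_left, inner_sub_right, inner_add_left, inner_add_right,
    inner_smul_left, inner_smul_right, RCLike.conj_to_real, real_inner_comm a b,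
    real_inner_comm a w, real_inner_comm b w]
  ring

/-- strong minimality at the prox point -/

lemma nes_prox (g : E → ℝ) (hg : ConvexOn ℝ Set.univ g) (t : ℝ) (ht : 0 < t) (w p : E)
    (hp : IsMinOn (fun u => t * g u + (1 / 2) * ‖u - w‖ ^ 2) Set.univ p) (z : E) :
    t * g p + (1 / 2) * ‖p - w‖ ^ 2 + (1 / 2) * ‖z - p‖ ^ 2
      ≤ t * g z + (1 / 2) * ‖z - w‖ ^ 2 := by
  set φ : E → ℝ := fun u => t * g u + (1 / 2) * ‖u - w‖ ^ 2 with hφ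
  have key : ∀ θ ∈ Set.Ioo (0:ℝ) 1,
      φ p + (1 - θ) / 2 * ‖z - p‖ ^ 2 ≤ φ z := by
    intro θ hθ
    set m : E := (1 - θ) • p + θ • z with hm
    have h1 : φ p ≤ φ m := hp (Set.mem_univ m)
    have hgm : g m ≤ (1 - θ) * g p + θ * g z :=
      hg.2 (Set.mem_univ p) (Set.mem_univ z) (by linarith [hθ.2]) hθ.1.le (by ring)
    have hquad := nes_quad_id p z w θ
    have hφm : φ m ≤ (1 - θ) * φ p + θ * φ z - θ * (1 - θ) / 2 * ‖z - p‖ ^ 2 := by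
      simp only [φ, hm]
      rw [hquad]
      have : t * g ((1 - θ) • p + θ • z) ≤ t * ((1 - θ) * g p + θ * g z) :=
        mul_le_mul_of_nonneg_left hgm ht.le
      nlinarith
    have h2 : θ * φ p ≤ θ * φ z - θ * (1 - θ) / 2 * ‖z - p‖ ^ 2 := by
      have h12 := h1.trans hφm
      linarith [h12]
    have h4 : θ * (φ p + (1 - θ) / 2 * ‖z - p‖ ^ 2) ≤ θ * φ z := by linarith
    exact le_of_mul_le_mul_left h4 hθ.1
  have hlim : Tendsto (fun θ : ℝ => φ p + (1 - θ) / 2 * ‖z - p‖ ^ 2) (𝓝[>] (0:ℝ))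
      (𝓝 (φ p + (1 - 0) / 2 * ‖z - p‖ ^ 2)) := by
    apply Tendsto.mono_left _ nhdsWithin_le_nhds
    exact (Continuous.tendsto (by continuity) 0)
  have hev : ∀ᶠ θ in 𝓝[>] (0:ℝ), φ p + (1 - θ) / 2 * ‖z - p‖ ^ 2 ≤ φ z := by
    filter_upwards [Ioo_mem_nhdsGT_of_mem (Set.mem_Ico.mpr ⟨le_refl 0, one_pos⟩)] with θ hθ
    exact key θ hθ
  have := le_of_tendsto hlim hev
  simp only [φ] at this
  linarith [this]

lemma nes_step (f g : E → ℝ) (L : ℝ) (hL : 0 < L)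
    (hf : ConvexOn ℝ Set.univ f) (hdiff : Differentiable ℝ f)
    (hlip : ∀ u v : E, ‖gradient f u - gradient f v‖ ≤ L * ‖u - v‖)
    (hg : ConvexOn ℝ Set.univ g) (t : ℝ) (htL : t = 1 / L)
    (yk p : E)
    (hp : IsMinOn (fun u => t * g u + (1 / 2) * ‖u - (yk - t • gradient f yk)‖ ^ 2)
      Set.univ p) (z : E) :
    t * (f p + g p) ≤ t * (f z + g z)
      + (1 / 2) * ‖z - yk‖ ^ 2 - (1 / 2) * ‖z - p‖ ^ 2 := by
  have ht : 0 < t := htL ▸ one_div_pos.mpr hL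
  have htL1 : t * L = 1 := by rw [htL]; field_simp
  set gy := gradient f yk with hgy
  have hprox := nes_prox g hg t ht (yk - t • gy) p hp z
  -- expand the two norms involving w
  have e1 : ‖p - (yk - t • gy)‖ ^ 2
      = ‖p - yk‖ ^ 2 + 2 * (t * ⟪gy, p - yk⟫) + t ^ 2 * ‖gy‖ ^ 2 := by
    have : p - (yk - t • gy) = (p - yk) + t • gy := by abel
    rw [this, norm_add_sq_real, real_inner_smul_right, norm_smul]
    rw [real_inner_comm]
    simp [Real.norm_eq_abs, mul_pow, sq_abs]
  have e2 : ‖z - (yk - t • gy)‖ ^ 2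
      = ‖z - yk‖ ^ 2 + 2 * (t * ⟪gy, z - yk⟫) + t ^ 2 * ‖gy‖ ^ 2 := by
    have : z - (yk - t • gy) = (z - yk) + t • gy := by abel
    rw [this, norm_add_sq_real, real_inner_smul_right, norm_smul]
    rw [real_inner_comm]
    simp [Real.norm_eq_abs, mul_pow, sq_abs]
  rw [e1, e2] at hprox
  -- descent lemma at (yk, p), multiplied by t
  have hdesc := nes_descent f hdiff L hL hlip yk p
  have hdesc' : t * f p ≤ t * f yk + t * ⟪gy, p - yk⟫ + (1 / 2) * ‖p - yk‖ ^ 2 := by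
    have h := mul_le_mul_of_nonneg_left hdesc ht.le
    have : t * (L / 2 * ‖p - yk‖ ^ 2) = (1 / 2) * ‖p - yk‖ ^ 2 := by
      field_simp; nlinarith [htL1]
    nlinarith [h, this]
  -- convexity of f at yk towards z, multiplied by t
  have hconv := nes_convex_ineq f hf hdiff yk z
  have hconv' : t * f yk + t * ⟪gy, z - yk⟫ ≤ t * f z := by
    have := mul_le_mul_of_nonneg_left hconv ht.le
    nlinarith [this]
  linarith [hprox, hdesc', hconv']

end NesterovAux

/-- Convergence of Nesterov's first accelerated method with fixed step size
`t = 1/L` for the composite convex problem `min f + g`. -/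
theorem nesterov_fix_stepsize_converge
    {E : Type*} [NormedAddCommGroup E] [InnerProductSpace ℝ E] [FiniteDimensional ℝ E]
    (f g : E → ℝ) (L : ℝ) (hL : 0 < L)
    (hf : ConvexOn ℝ Set.univ f) (hdiff : Differentiable ℝ f)
    (hlip : ∀ u v : E, ‖gradient f u - gradient f v‖ ≤ L * ‖u - v‖)
    (hg : ConvexOn ℝ Set.univ g)
    (t : ℝ) (htL : t = 1 / L)
    (γ : ℕ → ℝ) (hγ : ∀ k : ℕ, γ k = 2 / (2 + (k : ℝ)))
    (x₀ : E) (x y : ℕ → E) (hx0 : x 0 = x₀) (hy0 : y 0 = x 0)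
    (hy : ∀ k : ℕ,
      y (k + 1) = x (k + 1) + (γ (k + 1) * (1 - γ k) / γ k) • (x (k + 1) - x k))
    (hupdate : ∀ k : ℕ,
      IsMinOn (fun u => t * g u + (1 / 2) * ‖u - (y k - t • gradient f (y k))‖ ^ 2)
        Set.univ (x (k + 1)))
    (xm : E) (hxm : IsMinOn (fun u => f u + g u) Set.univ xm) :
    ∀ k : ℕ,
      f (x (k + 1)) + g (x (k + 1)) - f xm - g xm
        ≤ 2 * L / ((k : ℝ) + 2) ^ 2 * ‖x₀ - xm‖ ^ 2 := by
  have ht : 0 < t := htL ▸ one_div_pos.mpr hL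
  set F : E → ℝ := fun v => f v + g v with hF
  have hγpos : ∀ k : ℕ, 0 < γ k := by
    intro k; rw [hγ]; positivity
  have hγle : ∀ k : ℕ, γ k ≤ 1 := by
    intro k; rw [hγ]
    rw [div_le_one (by positivity)]
    linarith [Nat.cast_nonneg (α := ℝ) k]
  -- auxiliary sequence
  set u : ℕ → E := fun k => Nat.casesOn k (x 0) (fun j => x j + (γ j)⁻¹ • (x (j+1) - x j))
    with hu
  have hu0 : u 0 = x 0 := rfl
  have hus : ∀ k : ℕ, u (k+1) = x k + (γ k)⁻¹ • (x (k+1) - x k) := fun k => rfl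
  clear_value u F
  -- y k = x k + γ k • (u k - x k)
  have hyI : ∀ k : ℕ, y k = x k + γ k • (u k - x k) := by
    intro k
    cases k with
    | zero => rw [hy0, hu0]; simp
    | succ k =>
      rw [hy k, hus k]
      have hne : γ k ≠ 0 := (hγpos k).ne'
      have hc : γ (k+1) * (1 - γ k) / γ k = γ (k+1) * ((γ k)⁻¹ - 1) := by
        field_simp
      rw [hc]
      module
  -- the per-step key inequality
  have key : ∀ k : ℕ,
      t * (F (x (k+1)) - ((1 - γ k) * F (x k) + γ k * F xm))
        ≤ (γ k)^2 / 2 * (‖xm - u k‖^2 - ‖xm - u (k+1)‖^2) := by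
    intro k
    set z : E := x k + γ k • (xm - x k) with hz
    have hzc : z = (1 - γ k) • x k + γ k • xm := by
      rw [hz]; module
    have hFz : F z ≤ (1 - γ k) * F (x k) + γ k * F xm := by
      have ha1 : (0:ℝ) ≤ 1 - γ k := by linarith [hγle k]
      have hab : (1 - γ k) + γ k = 1 := by ring
      have h1 := hf.2 (Set.mem_univ (x k)) (Set.mem_univ xm) ha1 (hγpos k).le hab
      have h2 := hg.2 (Set.mem_univ (x k)) (Set.mem_univ xm) ha1 (hγpos k).le hab
      rw [hzc]
      simp only [smul_eq_mul] at h1 h2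
      simp only [hF]
      linarith [h1, h2]
    have hinv : γ k * (γ k)⁻¹ = 1 := mul_inv_cancel₀ (hγpos k).ne'
    have hzy : z - y k = γ k • (xm - u k) := by
      rw [hz, hyI k]; module
    have hne : γ k ≠ 0 := (hγpos k).ne'
    have hzx : z - x (k+1) = γ k • (xm - u (k+1)) := by
      rw [hz, hus k]
      match_scalars <;> (field_simp; try ring)
    have hstep := nes_step f g L hL hf hdiff hlip hg t htL (y k) (x (k+1))
      (hupdate k) z
    have hnorm1 : ‖z - y k‖^2 = (γ k)^2 * ‖xm - u k‖^2 := by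
      rw [hzy, norm_smul, Real.norm_eq_abs, mul_pow, sq_abs]
    have hnorm2 : ‖z - x (k+1)‖^2 = (γ k)^2 * ‖xm - u (k+1)‖^2 := by
      rw [hnorm1] at hstep; rw [hzx] at hstep
      rw [hzx, norm_smul, Real.norm_eq_abs, mul_pow, sq_abs]
    rw [hnorm1, hnorm2] at hstep
    have hFz' : t * F z ≤ t * ((1 - γ k) * F (x k) + γ k * F xm) :=
      mul_le_mul_of_nonneg_left hFz ht.le
    simp only [hF] at hFz' ⊢
    linarith [hstep, hFz']
  have hφ : ∀ k : ℕ, 0 ≤ F (x k) - F xm := by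
    intro k
    have h : F xm ≤ F (x k) := (isMinOn_iff.mp hxm) (x k) (Set.mem_univ (x k))
    simp only [hF] at h ⊢
    linarith [h]
  -- the Lyapunov induction
  have claim : ∀ k : ℕ,
      t * (F (x (k+1)) - F xm) + (γ k)^2 * ‖xm - u (k+1)‖^2 / 2
        ≤ (γ k)^2 * ‖xm - x 0‖^2 / 2 := by
    intro k
    induction k with
    | zero =>
      have h0 := key 0
      have hγ0 : γ 0 = 1 := by rw [hγ]; norm_num
      rw [hγ0] at h0 ⊢
      rw [hu0] at h0
      nlinarith [h0]
    | succ k ih =>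
      have hk := key (k+1)
      have coeff : (1 - γ (k+1)) * (γ k)^2 ≤ (γ (k+1))^2 := by
        rw [hγ, hγ]
        push_cast
        set a : ℝ := (k : ℝ) with ha
        have h1 : (0:ℝ) < 2 + a := by positivity
        have h3 : (0:ℝ) < a + 3 := by positivity
        have eL : (1 - 2/(2+(a+1))) * ((2:ℝ)/(2+a))^2 = (4*(a+1))/((a+3)*(2+a)^2) := by
          field_simp [show (2:ℝ) + (a + 1) ≠ 0 by positivity]
          ring
        have eR : ((2:ℝ)/(2+(a+1)))^2 = 4/((a+3)^2) := by
          rw [show (2+(a+1) : ℝ) = a + 3 by ring, div_pow]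
          norm_num
        rw [eL, eR, div_le_div_iff₀ (by positivity) (by positivity)]
        nlinarith [h3]
      have hc2 : 0 < (γ k)^2 := pow_pos (hγpos k) 2
      have hc3 : 0 < (γ (k+1))^2 := pow_pos (hγpos (k+1)) 2
      have hD : 0 ≤ t * (F (x (k+1)) - F xm) := mul_nonneg ht.le (hφ (k+1))
      have m1 : (1 - γ (k+1)) * (γ k)^2 * (t * (F (x (k+1)) - F xm))
          ≤ (γ (k+1))^2 * (t * (F (x (k+1)) - F xm)) :=
        mul_le_mul_of_nonneg_right coeff hD
      have m2 := mul_le_mul_of_nonneg_left ih hc3.le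
      have step2' : (γ k)^2 * ((1 - γ (k+1)) * (t * (F (x (k+1)) - F xm))
            + (γ (k+1))^2 * ‖xm - u (k+1)‖^2 / 2)
          ≤ (γ k)^2 * ((γ (k+1))^2 * ‖xm - x 0‖^2 / 2) := by nlinarith [m1, m2]
      have step2 := le_of_mul_le_mul_left step2' hc2
      have m3 : t * (F (x (k+1+1)) - F xm) + (γ (k+1))^2 * ‖xm - u (k+1+1)‖^2 / 2
          ≤ (1 - γ (k+1)) * (t * (F (x (k+1)) - F xm))
            + (γ (k+1))^2 * ‖xm - u (k+1)‖^2 / 2 := by linarith [hk]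
      linarith [m3, step2]
  -- conclusion
  intro k
  have hcl := claim k
  have hA : 0 ≤ (γ k)^2 * ‖xm - u (k+1)‖^2 / 2 := by positivity
  have h1 : t * (F (x (k+1)) - F xm) ≤ (γ k)^2 * ‖xm - x 0‖^2 / 2 := by linarith
  have hγk : (γ k)^2 = 4 / ((k:ℝ) + 2)^2 := by
    rw [hγ, show (2 + (k:ℝ)) = (k:ℝ) + 2 by ring, div_pow]
    norm_num
  have hks : (0:ℝ) < ((k:ℝ) + 2)^2 := by positivity
  have hnorm : ‖xm - x 0‖ = ‖x₀ - xm‖ := by rw [hx0, norm_sub_rev]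
  rw [hγk, hnorm] at h1
  have hgoal : F (x (k+1)) - F xm ≤ 2 * L / ((k:ℝ) + 2)^2 * ‖x₀ - xm‖^2 := by
    rw [htL] at h1
    have hL' : (0:ℝ) < 1 / L := one_div_pos.mpr hL
    -- h1 : (1/L) * (F (x (k+1)) - F xm) ≤ (4/((k+2)^2)) * ‖x₀-xm‖^2 / 2
    have := mul_le_mul_of_nonneg_left h1 hL.le
    calc F (x (k+1)) - F xm = L * ((1/L) * (F (x (k+1)) - F xm)) := by
          rw [← mul_assoc, mul_one_div, div_self hL.ne', one_mul]
      _ ≤ L * (4 / ((k:ℝ) + 2)^2 * ‖x₀ - xm‖^2 / 2) := this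
      _ = 2 * L / ((k:ℝ) + 2)^2 * ‖x₀ - xm‖^2 := by ring
  simp only [hF] at hgoal
  linarith [hgoal]
end

section
/- Let E be a finite-dimensional real inner product space, let f : E → ℝ be convex on E and differentiable everywhere, with gradient Lipschitz continuous with constant L > 0. Let η be a step size with 0 < η ≤ 1/L, let x₀ ∈ E, and let (xₖ) be the gradient descent sequence x 0 = x₀, x(k+1) = xₖ − η·∇f(xₖ). If x* is a global minimizer of f on E, then for every positive integer k, f(xₖ) − f(x*) ≤ ‖x₀ − x*‖²/(2·k·η). -/
open Set RealInnerProductSpace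

/-- Derivative of `f` along a line. -/
lemma gd_line_hasDerivAt {E : Type*} [NormedAddCommGroup E] [InnerProductSpace ℝ E]
    [CompleteSpace E] {f : E → ℝ} (hdiff : Differentiable ℝ f) (x v : E) (t : ℝ) :
    HasDerivAt (fun t : ℝ => f (x + t • v)) ⟪gradient f (x + t • v), v⟫ t := by
  have h1 : HasDerivAt (fun t : ℝ => x + t • v) v t := by
    simpa using ((hasDerivAt_id t).smul_const v).const_add x
  have h2 := (hdiff (x + t • v)).hasGradientAt.hasFDerivAt
  have h3 := h2.comp_hasDerivAt t h1
  simp only [InnerProductSpace.toDual_apply_apply] at h3; exact h3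

/-- Descent lemma for `L`-Lipschitz gradients. -/
lemma gd_descent {E : Type*} [NormedAddCommGroup E] [InnerProductSpace ℝ E]
    [CompleteSpace E] {f : E → ℝ} {L : ℝ} (hL : 0 < L)
    (hdiff : Differentiable ℝ f)
    (hlip : ∀ u v : E, ‖gradient f u - gradient f v‖ ≤ L * ‖u - v‖)
    (x v : E) :
    f (x + v) ≤ f x + ⟪gradient f x, v⟫ + L / 2 * ‖v‖ ^ 2 := by
  set c : ℝ := ⟪gradient f x, v⟫ with hc
  set h : ℝ → ℝ := fun t => f (x + t • v) - t * c - L / 2 * t ^ 2 * ‖v‖ ^ 2 with hh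
  have hderiv : ∀ t : ℝ, HasDerivAt h
      (⟪gradient f (x + t • v), v⟫ - c - L * t * ‖v‖ ^ 2) t := by
    intro t
    have h1 := gd_line_hasDerivAt hdiff x v t
    have h2 : HasDerivAt (fun t : ℝ => t * c) c t := by
      simpa using (hasDerivAt_id t).mul_const c
    have h3 : HasDerivAt (fun t : ℝ => L / 2 * t ^ 2 * ‖v‖ ^ 2) (L * t * ‖v‖ ^ 2) t := by
      have := ((hasDerivAt_pow 2 t).const_mul (L / 2)).mul_const (‖v‖ ^ 2)
      refine this.congr_deriv ?_
      ring
    exact (h1.sub h2).sub h3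
  have hanti : AntitoneOn h (Icc (0 : ℝ) 1) := by
    apply antitoneOn_of_deriv_nonpos (convex_Icc 0 1)
    · exact fun t _ => ((hderiv t).continuousAt).continuousWithinAt
    · intro t ht
      exact ((hderiv t).differentiableAt).differentiableWithinAt
    · intro t ht
      rw [interior_Icc] at ht
      rw [(hderiv t).deriv]
      have hb : ⟪gradient f (x + t • v), v⟫ - c ≤ L * t * ‖v‖ ^ 2 := by
        have h1 : ⟪gradient f (x + t • v), v⟫ - c
            = ⟪gradient f (x + t • v) - gradient f x, v⟫ := by
          rw [inner_sub_left]
        have h2 := real_inner_le_norm (gradient f (x + t • v) - gradient f x) v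
        have h3 := hlip (x + t • v) x
        have h4 : ‖(x + t • v) - x‖ = t * ‖v‖ := by
          rw [add_sub_cancel_left, norm_smul, Real.norm_eq_abs, abs_of_pos ht.1]
        have hv : (0 : ℝ) ≤ ‖v‖ := norm_nonneg v
        rw [h4] at h3
        have h5 := mul_le_mul_of_nonneg_right h3 hv
        rw [h1]
        nlinarith
      linarith
  have h01 := hanti (by constructor <;> norm_num) (by constructor <;> norm_num) zero_le_one
  have h0 : h 0 = f x := by simp [hh]
  have h1 : h 1 = f (x + v) - c - L / 2 * ‖v‖ ^ 2 := by simp [hh]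
  rw [h0, h1] at h01
  linarith

/-- First-order condition for convexity. -/
lemma gd_convex_first_order {E : Type*} [NormedAddCommGroup E] [InnerProductSpace ℝ E]
    [CompleteSpace E] {f : E → ℝ} (hf : ConvexOn ℝ Set.univ f)
    (hdiff : Differentiable ℝ f) (x y : E) :
    f x + ⟪gradient f x, y - x⟫ ≤ f y := by
  set g : ℝ → ℝ := fun t => f (x + t • (y - x)) with hg
  have hgc : ConvexOn ℝ Set.univ g := by
    have := hf.comp_affineMap (AffineMap.lineMap x y : ℝ →ᵃ[ℝ] E)
    rw [Set.preimage_univ] at this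
    suffices e : g = f ∘ AffineMap.lineMap x y by rw [e]; exact this
    funext t
    simp [hg, AffineMap.lineMap_apply, add_comm]
  have hd : HasDerivAt g ⟪gradient f x, y - x⟫ 0 := by
    have := gd_line_hasDerivAt hdiff x (y - x) 0
    simpa using this
  have := hgc.le_slope_of_hasDerivAt (mem_univ (0 : ℝ)) (mem_univ (1 : ℝ)) one_pos hd
  rw [slope_def_field] at this
  simp only [hg] at this
  simp only [zero_smul, add_zero, one_smul] at this
  have hxy : x + (y - x) = y := by abel
  rw [hxy] at this
  have : ⟪gradient f x, y - x⟫ ≤ f y - f x := by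
    calc ⟪gradient f x, y - x⟫ ≤ (f y - f x) / (1 - 0) := this
    _ = f y - f x := by norm_num
  linarith

/-- Sublinear convergence of gradient descent with fixed step size
`0 < η ≤ 1/L` for a convex `L`-smooth function. -/
theorem gradient_descent_converge
    {E : Type*} [NormedAddCommGroup E] [InnerProductSpace ℝ E] [FiniteDimensional ℝ E]
    (f : E → ℝ) (L : ℝ) (hL : 0 < L)
    (hf : ConvexOn ℝ Set.univ f) (hdiff : Differentiable ℝ f)
    (hlip : ∀ u v : E, ‖gradient f u - gradient f v‖ ≤ L * ‖u - v‖)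
    (η : ℝ) (hη : 0 < η) (hη' : η ≤ 1 / L)
    (x₀ : E) (x : ℕ → E) (hx0 : x 0 = x₀)
    (hupdate : ∀ k : ℕ, x (k + 1) = x k - η • gradient f (x k))
    (xstar : E) (hxstar : IsMinOn f Set.univ xstar) :
    ∀ k : ℕ+, f (x k) - f xstar ≤ ‖x₀ - xstar‖ ^ 2 / (2 * (k : ℝ) * η) := by
  have hηL : η * L ≤ 1 := by
    rw [div_eq_mul_inv, one_mul] at hη'
    calc η * L ≤ L⁻¹ * L := by
          apply mul_le_mul_of_nonneg_right hη' hL.le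
    _ = 1 := inv_mul_cancel₀ hL.ne'
  set g : ℕ → E := fun k => gradient f (x k) with hgdef
  set b : ℕ → ℝ := fun k => ‖x k - xstar‖ ^ 2 with hbdef
  -- per-step descent
  have step1 : ∀ k : ℕ, f (x (k + 1)) ≤ f (x k) - η / 2 * ‖g k‖ ^ 2 := by
    intro k
    have hd := gd_descent hL hdiff hlip (x k) (-(η • g k))
    have hx1 : x (k + 1) = x k + -(η • g k) := by
      rw [hupdate k, sub_eq_add_neg]
    rw [← hx1] at hd
    have hinner : ⟪g k, -(η • g k)⟫ = -(η * ‖g k‖ ^ 2) := by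
      rw [inner_neg_right, real_inner_smul_right, real_inner_self_eq_norm_sq]
    have hnorm : ‖-(η • g k)‖ ^ 2 = η ^ 2 * ‖g k‖ ^ 2 := by
      rw [norm_neg, norm_smul, Real.norm_eq_abs, abs_of_pos hη, mul_pow]
    rw [hinner, hnorm] at hd
    have hsq : (0 : ℝ) ≤ ‖g k‖ ^ 2 := sq_nonneg _
    nlinarith
  -- per-step telescoping bound
  have step2 : ∀ k : ℕ, f (x (k + 1)) - f xstar ≤ (b k - b (k + 1)) / (2 * η) := by
    intro k
    have hb1 : b (k + 1) = b k - 2 * η * ⟪x k - xstar, g k⟫ + η ^ 2 * ‖g k‖ ^ 2 := by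
      have hx1 : x (k + 1) - xstar = (x k - xstar) - η • g k := by
        rw [hupdate k]; abel
      have := norm_sub_sq_real (x k - xstar) (η • g k)
      rw [← hx1] at this
      rw [hbdef]
      simp only
      rw [this, real_inner_smul_right, norm_smul, Real.norm_eq_abs, abs_of_pos hη, mul_pow]
      ring
    have hconv := gd_convex_first_order hf hdiff (x k) xstar
    have hinner : ⟪g k, xstar - x k⟫ = -⟪x k - xstar, g k⟫ := by
      rw [real_inner_comm, ← inner_neg_left, neg_sub]
    rw [hinner] at hconv
    have h1 := step1 k
    have : (b k - b (k + 1)) / (2 * η) = ⟪x k - xstar, g k⟫ - η / 2 * ‖g k‖ ^ 2 := by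
      rw [hb1]
      field_simp
      ring
    rw [this]
    linarith
  -- monotone decrease of f (x k)
  have hmono : ∀ m n : ℕ, m ≤ n → f (x n) ≤ f (x m) := by
    intro m n hmn
    induction n with
    | zero => simp_all
    | succ n ih =>
      rcases Nat.lt_or_ge m (n + 1) with h | h
      · have hmn' : m ≤ n := Nat.lt_succ_iff.mp h
        have := step1 n
        have hsq : (0 : ℝ) ≤ η / 2 * ‖g n‖ ^ 2 :=
          mul_nonneg (by positivity) (sq_nonneg _)
        linarith [ih hmn']
      · have : m = n + 1 := le_antisymm hmn h
        simp [this]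
  intro k
  set n : ℕ := (k : ℕ) with hn
  have hnpos : 0 < n := k.pos
  -- sum bound
  have hsum : (n : ℝ) * (f (x n) - f xstar) ≤ b 0 / (2 * η) := by
    have hsum1 : ∀ i ∈ Finset.range n, f (x n) - f xstar ≤ f (x (i + 1)) - f xstar := by
      intro i hi
      have : i + 1 ≤ n := Finset.mem_range.mp hi
      linarith [hmono (i + 1) n this]
    have h1 : (n : ℝ) * (f (x n) - f xstar)
        ≤ ∑ i ∈ Finset.range n, (f (x (i + 1)) - f xstar) := by
      calc (n : ℝ) * (f (x n) - f xstar)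
          = ∑ _i ∈ Finset.range n, (f (x n) - f xstar) := by
            rw [Finset.sum_const, Finset.card_range, nsmul_eq_mul]
        _ ≤ _ := Finset.sum_le_sum hsum1
    have h2 : ∑ i ∈ Finset.range n, (f (x (i + 1)) - f xstar)
        ≤ ∑ i ∈ Finset.range n, (b i - b (i + 1)) / (2 * η) :=
      Finset.sum_le_sum fun i _ => step2 i
    have h3 : ∑ i ∈ Finset.range n, (b i - b (i + 1)) / (2 * η)
        = (b 0 - b n) / (2 * η) := by
      rw [← Finset.sum_div]
      congr 1
      have := Finset.sum_range_sub' b n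
      simpa using this
    have h4 : (b 0 - b n) / (2 * η) ≤ b 0 / (2 * η) := by
      apply div_le_div_of_nonneg_right _ (by linarith)
      have : (0 : ℝ) ≤ b n := sq_nonneg _
      linarith
    linarith
  have hb0 : b 0 = ‖x₀ - xstar‖ ^ 2 := by rw [hbdef]; simp [hx0]
  rw [← hb0]
  have hnpos' : (0 : ℝ) < (n : ℝ) := by exact_mod_cast hnpos
  have heq : b 0 / (2 * (n : ℝ) * η) = (b 0 / (2 * η)) / (n : ℝ) := by
    rw [div_div]
    ring_nf
  rw [heq, le_div_iff₀ hnpos']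
  linarith
end

section
/- Let A be a real m × n matrix, b ∈ ℝᵐ, μ > 0, and define on the Euclidean space ℝⁿ the functions f(x) = (1/2)·‖A x − b‖₂² and g(x) = μ·‖x‖₁, with L = ‖Aᵀ A‖ the ℓ²-operator norm of Aᵀ A assumed positive. Let t satisfy 0 < t ≤ 1/L, let x₀ ∈ ℝⁿ, and let (xₖ) be the sequence with x 0 = x₀ given by the explicit proximal gradient update: zₖ = xₖ − t·Aᵀ(A xₖ − b) and x(k+1)ᵢ = sign(zₖᵢ)·max(|zₖᵢ| − t·μ, 0) for each coordinate i. Then for every positive integer k and every xm ∈ ℝⁿ, (f + g)(xₖ) − (f + g)(xm) ≤ (1/(2·k·t))·‖x₀ − xm‖². -/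
open Matrix

/-- Matrix–vector multiplication as a map between Euclidean spaces. -/
noncomputable def mulVecE {m n : ℕ} (A : Matrix (Fin m) (Fin n) ℝ)
    (x : EuclideanSpace ℝ (Fin n)) : EuclideanSpace ℝ (Fin m) :=
  WithLp.toLp 2 (A.mulVec x)

/-- The ℓ²-operator norm of a square matrix, i.e. the operator norm of the associated
linear map on Euclidean space. -/
noncomputable def l2OpNorm {n : ℕ} (B : Matrix (Fin n) (Fin n) ℝ) : ℝ :=
  ‖LinearMap.toContinuousLinearMap (Matrix.toEuclideanLin B)‖

/-- The ℓ¹ norm on ℝⁿ. -/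
noncomputable def l1Norm {n : ℕ} (x : EuclideanSpace ℝ (Fin n)) : ℝ := ∑ i, |x i|

open RealInnerProductSpace

section Aux

variable {m n : ℕ} (A : Matrix (Fin m) (Fin n) ℝ)

lemma mulVecE_sub (x y : EuclideanSpace ℝ (Fin n)) :
    mulVecE A (x - y) = mulVecE A x - mulVecE A y := by
  ext i
  simp only [mulVecE, PiLp.sub_apply, PiLp.toLp_apply, Matrix.mulVec, dotProduct,
    ← Finset.sum_sub_distrib]
  congr 1; ext j
  ring

lemma inner_mulVecE (x : EuclideanSpace ℝ (Fin n)) (y : EuclideanSpace ℝ (Fin m)) :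
    ⟪mulVecE A x, y⟫ = ⟪x, mulVecE Aᵀ y⟫ := by
  simp only [PiLp.inner_apply, RCLike.inner_apply, starRingEnd_apply, star_trivial]
  simp only [mulVecE, PiLp.toLp_apply, Matrix.mulVec, dotProduct, Matrix.transpose_apply,
    Finset.sum_mul, Finset.mul_sum]
  rw [Finset.sum_comm]
  congr 1; ext i; congr 1; ext j; ring

lemma mulVecE_mul (x : EuclideanSpace ℝ (Fin n)) :
    mulVecE (Aᵀ * A) x = mulVecE Aᵀ (mulVecE A x) := by
  simp [mulVecE, Matrix.mulVec_mulVec]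

lemma norm_mulVecE_le (B : Matrix (Fin n) (Fin n) ℝ) (x : EuclideanSpace ℝ (Fin n)) :
    ‖mulVecE B x‖ ≤ l2OpNorm B * ‖x‖ :=
  by simpa [l2OpNorm, mulVecE, Matrix.toEuclideanLin_apply] using
    (LinearMap.toContinuousLinearMap (Matrix.toEuclideanLin B)).le_opNorm x

lemma soft_key (c zz u xp : ℝ) (hc : 0 < c)
    (hxp : xp = Real.sign zz * max (|zz| - c) 0) :
    c * |xp| + (zz - xp) * (u - xp) ≤ c * |u| := by
  rcases le_or_gt (|zz|) c with hzc | hzc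
  · have h0 : xp = 0 := by rw [hxp, max_eq_right (by linarith), mul_zero]
    subst h0
    have h1 : zz * u ≤ |zz| * |u| := by rw [← abs_mul]; exact le_abs_self _
    have h2 : |zz| * |u| ≤ c * |u| := mul_le_mul_of_nonneg_right hzc (abs_nonneg u)
    simp only [abs_zero, mul_zero, sub_zero, zero_add]
    linarith
  · have hmax : max (|zz| - c) 0 = |zz| - c := max_eq_left (by linarith)
    have hz0 : zz ≠ 0 := by
      intro h; rw [h, abs_zero] at hzc; linarith
    rcases lt_or_gt_of_ne hz0 with hneg | hpos
    · have hs : Real.sign zz = -1 := Real.sign_of_neg hneg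
      have habs : |zz| = -zz := abs_of_neg hneg
      have hxp' : xp = zz + c := by rw [hxp, hs, hmax, habs]; ring
      have hxpneg : xp < 0 := by rw [hxp']; rw [habs] at hzc; linarith
      have haxp : |xp| = -(zz + c) := by rw [← hxp']; exact abs_of_neg hxpneg
      have hu : -|u| ≤ u := neg_abs_le u
      rw [haxp, hxp']
      nlinarith
    · have hs : Real.sign zz = 1 := Real.sign_of_pos hpos
      have habs : |zz| = zz := abs_of_pos hpos
      have hxp' : xp = zz - c := by rw [hxp, hs, hmax, habs]; ring
      have hxppos : 0 < xp := by rw [hxp']; rw [habs] at hzc; linarith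
      have haxp : |xp| = zz - c := by rw [← hxp']; exact abs_of_pos hxppos
      have hu : u ≤ |u| := le_abs_self u
      rw [haxp, hxp']
      nlinarith

lemma l1_subgrad (c : ℝ) (hc : 0 < c) (zz xp u : EuclideanSpace ℝ (Fin n))
    (hxp : ∀ i, xp i = Real.sign (zz i) * max (|zz i| - c) 0) :
    c * l1Norm xp + ⟪zz - xp, u - xp⟫ ≤ c * l1Norm u := by
  simp only [l1Norm, PiLp.inner_apply, RCLike.inner_apply, starRingEnd_apply, star_trivial,
    PiLp.sub_apply, Finset.mul_sum, ← Finset.sum_add_distrib]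
  apply Finset.sum_le_sum
  intro i _
  linarith [soft_key c (zz i) (u i) (xp i) hc (hxp i), mul_comm (zz i - xp i) (u i - xp i)]

lemma quad_expand (b : EuclideanSpace ℝ (Fin m)) (xa u : EuclideanSpace ℝ (Fin n)) :
    (1 / 2) * ‖mulVecE A u - b‖ ^ 2
      = (1 / 2) * ‖mulVecE A xa - b‖ ^ 2
        + ⟪mulVecE Aᵀ (mulVecE A xa - b), u - xa⟫
        + (1 / 2) * ‖mulVecE A (u - xa)‖ ^ 2 := by
  have hinner : ⟪mulVecE A xa - b, mulVecE A (u - xa)⟫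
      = ⟪mulVecE Aᵀ (mulVecE A xa - b), u - xa⟫ := by
    rw [real_inner_comm, inner_mulVecE]
    exact real_inner_comm _ _
  rw [show mulVecE A u - b = (mulVecE A xa - b) + mulVecE A (u - xa) by
        rw [mulVecE_sub]; abel,
      norm_add_sq_real, hinner]
  ring

/-- The Lasso objective. -/
noncomputable def lF (b : EuclideanSpace ℝ (Fin m)) (μ : ℝ)
    (u : EuclideanSpace ℝ (Fin n)) : ℝ :=
  (1 / 2) * ‖mulVecE A u - b‖ ^ 2 + μ * l1Norm u

lemma pg_step_s3 (b : EuclideanSpace ℝ (Fin m)) (μ t : ℝ) (hμ : 0 < μ) (ht : 0 < t)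
    (hsmooth : ∀ d : EuclideanSpace ℝ (Fin n), t * ‖mulVecE A d‖ ^ 2 ≤ ‖d‖ ^ 2)
    (xk xp zk u : EuclideanSpace ℝ (Fin n))
    (hzk : zk = xk - t • mulVecE Aᵀ (mulVecE A xk - b))
    (hup : ∀ i, xp i = Real.sign (zk i) * max (|zk i| - t * μ) 0) :
    2 * t * (lF A b μ xp - lF A b μ u) ≤ ‖u - xk‖ ^ 2 - ‖u - xp‖ ^ 2 := by
  have hsub := l1_subgrad (t * μ) (by positivity) zk xp u hup
  subst hzk
  have hq1 := quad_expand A b xk xp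
  have hq2 := quad_expand A b xk u
  have hq1t : 2 * t * ((1 / 2) * ‖mulVecE A xp - b‖ ^ 2)
      = 2 * t * ((1 / 2) * ‖mulVecE A xk - b‖ ^ 2)
        + 2 * t * ⟪mulVecE Aᵀ (mulVecE A xk - b), xp - xk⟫
        + t * ‖mulVecE A (xp - xk)‖ ^ 2 := by linear_combination (2 * t) * hq1
  have hq2t : 2 * t * ((1 / 2) * ‖mulVecE A u - b‖ ^ 2)
      = 2 * t * ((1 / 2) * ‖mulVecE A xk - b‖ ^ 2)
        + 2 * t * ⟪mulVecE Aᵀ (mulVecE A xk - b), u - xk⟫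
        + t * ‖mulVecE A (u - xk)‖ ^ 2 := by linear_combination (2 * t) * hq2
  have e1 : ⟪xk - t • mulVecE Aᵀ (mulVecE A xk - b) - xp, u - xp⟫
      = ⟪xk - xp, u - xp⟫ - t * ⟪mulVecE Aᵀ (mulVecE A xk - b), u - xp⟫ := by
    rw [sub_right_comm, inner_sub_left, real_inner_smul_left]
  rw [e1] at hsub
  have e2 : ‖u - xk‖ ^ 2 = ‖u - xp‖ ^ 2 + 2 * ⟪u - xp, xp - xk⟫ + ‖xp - xk‖ ^ 2 := by
    have h := norm_add_sq_real (u - xp) (xp - xk)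
    rw [sub_add_sub_cancel] at h
    exact h
  have e3 : ⟪mulVecE Aᵀ (mulVecE A xk - b), u - xp⟫
      = ⟪mulVecE Aᵀ (mulVecE A xk - b), u - xk⟫
        - ⟪mulVecE Aᵀ (mulVecE A xk - b), xp - xk⟫ := by
    rw [← inner_sub_right]
    congr 1
    abel
  have e3t : t * ⟪mulVecE Aᵀ (mulVecE A xk - b), u - xp⟫
      = t * ⟪mulVecE Aᵀ (mulVecE A xk - b), u - xk⟫
        - t * ⟪mulVecE Aᵀ (mulVecE A xk - b), xp - xk⟫ := by
    rw [e3]; ring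
  have e4 : ⟪xk - xp, u - xp⟫ = -⟪u - xp, xp - xk⟫ := by
    rw [real_inner_comm, ← neg_sub xp xk, inner_neg_right]
  have hsm := hsmooth (xp - xk)
  have htQ2 : 0 ≤ t * ‖mulVecE A (u - xk)‖ ^ 2 :=
    mul_nonneg ht.le (sq_nonneg _)
  simp only [lF]
  linarith [hq1t, hq2t, hsub, e2, e3t, e4, hsm, htQ2]

end Aux

/-- Sublinear convergence of the explicit proximal gradient (soft
thresholding) iteration for the Lasso problem `min (1/2)‖Ax - b‖² + μ‖x‖₁`. -/
theorem lasso_pg_converge {m n : ℕ}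
    (A : Matrix (Fin m) (Fin n) ℝ) (b : EuclideanSpace ℝ (Fin m)) (μ : ℝ) (hμ : 0 < μ)
    (hL : 0 < l2OpNorm (Aᵀ * A))
    (t : ℝ) (ht : 0 < t) (ht' : t ≤ 1 / l2OpNorm (Aᵀ * A))
    (x₀ : EuclideanSpace ℝ (Fin n)) (x z : ℕ → EuclideanSpace ℝ (Fin n))
    (hx0 : x 0 = x₀)
    (hz : ∀ k : ℕ, z k = x k - t • mulVecE Aᵀ (mulVecE A (x k) - b))
    (hupdate : ∀ (k : ℕ) (i : Fin n),
      x (k + 1) i = Real.sign (z k i) * max (|z k i| - t * μ) 0) :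
    ∀ (k : ℕ+) (xm : EuclideanSpace ℝ (Fin n)),
      ((1 / 2) * ‖mulVecE A (x k) - b‖ ^ 2 + μ * l1Norm (x k))
          - ((1 / 2) * ‖mulVecE A xm - b‖ ^ 2 + μ * l1Norm xm)
        ≤ 1 / (2 * (k : ℝ) * t) * ‖x₀ - xm‖ ^ 2 := by
  have hsmooth : ∀ d : EuclideanSpace ℝ (Fin n),
      t * ‖mulVecE A d‖ ^ 2 ≤ ‖d‖ ^ 2 := by
    intro d
    have h1 : ‖mulVecE A d‖ ^ 2 = ⟪d, mulVecE (Aᵀ * A) d⟫ := by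
      rw [mulVecE_mul, ← inner_mulVecE, real_inner_self_eq_norm_sq]
    have h2 : ⟪d, mulVecE (Aᵀ * A) d⟫ ≤ ‖d‖ * ‖mulVecE (Aᵀ * A) d‖ :=
      real_inner_le_norm _ _
    have h3 : ‖mulVecE (Aᵀ * A) d‖ ≤ l2OpNorm (Aᵀ * A) * ‖d‖ := norm_mulVecE_le _ d
    have h4 : ‖mulVecE A d‖ ^ 2 ≤ l2OpNorm (Aᵀ * A) * ‖d‖ ^ 2 := by
      nlinarith [norm_nonneg d, norm_nonneg (mulVecE (Aᵀ * A) d)]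
    have h5 : t * l2OpNorm (Aᵀ * A) ≤ 1 := by
      rw [le_div_iff₀ hL] at ht'; linarith
    nlinarith [sq_nonneg ‖d‖, norm_nonneg d]
  have step : ∀ (k : ℕ) (u : EuclideanSpace ℝ (Fin n)),
      2 * t * (lF A b μ (x (k + 1)) - lF A b μ u)
        ≤ ‖u - x k‖ ^ 2 - ‖u - x (k + 1)‖ ^ 2 := fun k u =>
    pg_step_s3 A b μ t hμ ht hsmooth (x k) (x (k + 1)) (z k) u (hz k) (hupdate k)
  have desc : ∀ k : ℕ, lF A b μ (x (k + 1)) ≤ lF A b μ (x k) := by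
    intro k
    have h := step k (x k)
    rw [sub_self, norm_zero] at h
    nlinarith [sq_nonneg ‖x k - x (k + 1)‖]
  intro k xm
  have key : ∀ N : ℕ,
      2 * t * ((N : ℝ) * (lF A b μ (x N) - lF A b μ xm)) + ‖xm - x N‖ ^ 2
        ≤ ‖xm - x 0‖ ^ 2 := by
    intro N
    induction N with
    | zero => simp
    | succ N ih =>
      have hstep := step N xm
      have hmono : (N : ℝ) * (lF A b μ (x (N + 1)) - lF A b μ xm)
          ≤ (N : ℝ) * (lF A b μ (x N) - lF A b μ xm) :=
        mul_le_mul_of_nonneg_left (by linarith [desc N]) (Nat.cast_nonneg N)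
      push_cast
      nlinarith
  have hk0 : (0 : ℝ) < (k : ℝ) := by exact_mod_cast k.pos
  have h := key k
  have hnn : 0 ≤ ‖xm - x (k : ℕ)‖ ^ 2 := sq_nonneg _
  have h2 : 2 * t * ((k : ℝ) * (lF A b μ (x (k : ℕ)) - lF A b μ xm))
      ≤ ‖x₀ - xm‖ ^ 2 := by
    have e : ‖xm - x 0‖ = ‖x₀ - xm‖ := by rw [hx0, norm_sub_rev]
    rw [e] at h
    linarith
  have hgoal : lF A b μ (x (k : ℕ)) - lF A b μ xm
      ≤ 1 / (2 * (k : ℝ) * t) * ‖x₀ - xm‖ ^ 2 := by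
    rw [div_mul_eq_mul_div, le_div_iff₀ (by positivity)]
    nlinarith
  simpa only [lF] using hgoal
end

section
/- Let M be a real m × n matrix, b ∈ ℝᵐ, and λ ∈ ℝⁿ with λᵢ ≥ 0 for all i. Define on ℝⁿ the functions f(d) = (1/2)·‖M d − b‖₂² and g(d) = Σᵢ λᵢ·|dᵢ|, and set L = ‖Mᵀ M‖ (the ℓ²-operator norm), assumed positive. Consider Nesterov's first method with tₖ = 1/L and γₖ = 2/(2+k): y 0 = x 0 = x₀; for k ≥ 1, yₖ = xₖ + (γₖ·(1 − γ_{k−1})/γ_{k−1})·(xₖ − x_{k−1}); wₖ = yₖ − tₖ·Mᵀ(M yₖ − b); and x(k+1)ᵢ = sign(wₖᵢ)·max(|wₖᵢ| − tₖ·λᵢ, 0). If xm is a global minimizer of f + g on ℝⁿ, then for every natural number k, f(x(k+1)) + g(x(k+1)) − f(xm) − g(xm) ≤ (2·L/(k+2)²)·‖x₀ − xm‖². -/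
open Matrix RealInnerProductSpace

section Aux

open RealInnerProductSpace

lemma aux_adjoint {m n : ℕ} (M : Matrix (Fin m) (Fin n) ℝ) (u : EuclideanSpace ℝ (Fin m))
    (v : EuclideanSpace ℝ (Fin n)) : ⟪mulVecE Mᵀ u, v⟫ = ⟪u, mulVecE M v⟫ := by
  simp only [PiLp.inner_apply, mulVecE, RCLike.inner_apply, conj_trivial, Matrix.mulVec,
    dotProduct, transpose_apply]
  simp only [Finset.sum_mul, Finset.mul_sum]
  rw [Finset.sum_comm]
  congr 1; ext i; congr 1; ext j; ring

lemma aux_smooth {m n : ℕ} (M : Matrix (Fin m) (Fin n) ℝ) (v : EuclideanSpace ℝ (Fin n)) :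
    ‖mulVecE M v‖ ^ 2 ≤ l2OpNorm (Mᵀ * M) * ‖v‖ ^ 2 := by
  have h := (LinearMap.toContinuousLinearMap (Matrix.toEuclideanLin (Mᵀ * M))).le_opNorm v
  have e : (LinearMap.toContinuousLinearMap (Matrix.toEuclideanLin (Mᵀ * M))) v
      = mulVecE Mᵀ (mulVecE M v) := by
    show WithLp.toLp 2 ((Mᵀ * M).mulVec v) = WithLp.toLp 2 (Mᵀ.mulVec (M.mulVec v))
    rw [Matrix.mulVec_mulVec]
  rw [e] at h
  have h2 : ‖mulVecE M v‖ ^ 2 = ⟪mulVecE Mᵀ (mulVecE M v), v⟫ := by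
    rw [aux_adjoint, real_inner_self_eq_norm_sq]
  have h3 := real_inner_le_norm (mulVecE Mᵀ (mulVecE M v)) v
  have h4 : ‖mulVecE Mᵀ (mulVecE M v)‖ * ‖v‖ ≤ l2OpNorm (Mᵀ * M) * ‖v‖ * ‖v‖ :=
    mul_le_mul_of_nonneg_right h (norm_nonneg v)
  nlinarith [norm_nonneg v]

lemma aux_soft (l t w z : ℝ) (hl : 0 ≤ l) (ht : 0 < t) :
    (w - Real.sign w * max (|w| - t * l) 0) * (z - Real.sign w * max (|w| - t * l) 0)
      ≤ t * (l * |z|) - t * (l * |Real.sign w * max (|w| - t * l) 0|) := by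
  rcases le_or_gt (|w|) (t * l) with h | h
  · rw [max_eq_right (by linarith)]
    simp only [mul_zero, sub_zero, abs_zero]
    nlinarith [mul_le_mul_of_nonneg_right h (abs_nonneg z), le_abs_self (w*z),
      (abs_mul w z).le]
  · rw [max_eq_left (by linarith)]
    rcases lt_trichotomy w 0 with hw | hw | hw
    · rw [Real.sign_of_neg hw, abs_of_neg hw]
      have habs : |(-1:ℝ) * (-w - t*l)| = -w - t*l := by
        rw [neg_one_mul, abs_neg, abs_of_nonneg (by rw [abs_of_neg hw] at h; linarith)]
      rw [habs]
      nlinarith [neg_abs_le z, mul_nonneg ht.le hl]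
    · exfalso; rw [hw] at h; simp at h; nlinarith
    · rw [Real.sign_of_pos hw, abs_of_pos hw]
      have habs : |(1:ℝ) * (w - t*l)| = w - t*l := by
        rw [one_mul, abs_of_nonneg (by rw [abs_of_pos hw] at h; linarith)]
      rw [habs]
      nlinarith [le_abs_self z, mul_nonneg ht.le hl]

lemma aux_mulVecE_sub {m n : ℕ} (M : Matrix (Fin m) (Fin n) ℝ)
    (u v : EuclideanSpace ℝ (Fin n)) :
    mulVecE M (u - v) = mulVecE M u - mulVecE M v := by
  ext i
  simp [mulVecE, Matrix.mulVec, dotProduct, PiLp.sub_apply, mul_sub,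
    Finset.sum_sub_distrib]

lemma aux_mulVecE_comb {m n : ℕ} (M : Matrix (Fin m) (Fin n) ℝ) (θ η : ℝ)
    (u v : EuclideanSpace ℝ (Fin n)) :
    mulVecE M (θ • u + η • v) = θ • mulVecE M u + η • mulVecE M v := by
  ext i
  simp [mulVecE, Matrix.mulVec, dotProduct, PiLp.add_apply, PiLp.smul_apply,
    smul_eq_mul, mul_add, Finset.sum_add_distrib, Finset.mul_sum]
  congr 1
  · congr 1; ext j; ring
  · congr 1; ext j; ring

lemma aux_quad {m n : ℕ} (M : Matrix (Fin m) (Fin n) ℝ) (b : EuclideanSpace ℝ (Fin m))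
    (u v : EuclideanSpace ℝ (Fin n)) :
    (1/2) * ‖mulVecE M u - b‖ ^ 2 = (1/2) * ‖mulVecE M v - b‖ ^ 2
      + ⟪mulVecE Mᵀ (mulVecE M v - b), u - v⟫ + (1/2) * ‖mulVecE M (u - v)‖ ^ 2 := by
  have hsub : mulVecE M u - b = (mulVecE M v - b) + mulVecE M (u - v) := by
    rw [aux_mulVecE_sub]; abel
  rw [hsub, norm_add_sq_real, aux_adjoint]
  ring

lemma aux_normsq_comb {E : Type*} [NormedAddCommGroup E] [InnerProductSpace ℝ E]
    (θ : ℝ) (u v : E) (h0 : 0 ≤ θ) (h1 : θ ≤ 1) :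
    ‖(1 - θ) • u + θ • v‖ ^ 2 ≤ (1 - θ) * ‖u‖ ^ 2 + θ * ‖v‖ ^ 2 := by
  have key : 0 ≤ θ * (1 - θ) * (‖u‖ ^ 2 - 2 * ⟪u, v⟫ + ‖v‖ ^ 2) := by
    rw [← norm_sub_sq_real]
    exact mul_nonneg (mul_nonneg h0 (by linarith)) (sq_nonneg _)
  rw [norm_add_sq_real, real_inner_smul_left, real_inner_smul_right, norm_smul, norm_smul,
    Real.norm_eq_abs, Real.norm_eq_abs, abs_of_nonneg h0, abs_of_nonneg (by linarith)]
  nlinarith [key]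

/-- The objective function of the wavelet decomposition model. -/
noncomputable def objF {m n : ℕ} (M : Matrix (Fin m) (Fin n) ℝ)
    (b : EuclideanSpace ℝ (Fin m)) (lam : Fin n → ℝ)
    (d : EuclideanSpace ℝ (Fin n)) : ℝ :=
  (1/2) * ‖mulVecE M d - b‖ ^ 2 + ∑ i, lam i * |d i|


lemma aux_key {m n : ℕ} (M : Matrix (Fin m) (Fin n) ℝ) (b : EuclideanSpace ℝ (Fin m))
    (lam : Fin n → ℝ) (hlam : ∀ i, 0 ≤ lam i)
    (t : ℝ) (ht : 0 < t) (htinv : t⁻¹ = l2OpNorm (Mᵀ * M))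
    (y w p z : EuclideanSpace ℝ (Fin n))
    (hw : w = y - t • mulVecE Mᵀ (mulVecE M y - b))
    (hupd : ∀ i, p i = Real.sign (w i) * max (|w i| - t * lam i) 0) :
    objF M b lam p - objF M b lam z
      ≤ l2OpNorm (Mᵀ * M)/2 * ‖y - z‖^2 - l2OpNorm (Mᵀ * M)/2 * ‖p - z‖^2 := by
  have hgk : mulVecE Mᵀ (mulVecE M y - b) = t⁻¹ • (y - w) := by
    rw [hw, sub_sub_cancel, inv_smul_smul₀ (ne_of_gt ht)]
  have hq1 := aux_quad M b p y
  have hq2 := aux_quad M b z y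
  have hs1 := aux_smooth M (p - y)
  have hs2 : (0:ℝ) ≤ ‖mulVecE M (z - y)‖^2 := sq_nonneg _
  have hsg : ⟪w - p, z - p⟫ ≤ t * (∑ i, lam i * |z i|) - t * (∑ i, lam i * |p i|) := by
    have step : ∀ i : Fin n, (w i - p i) * (z i - p i)
        ≤ t * (lam i * |z i|) - t * (lam i * |p i|) := by
      intro i
      have h := aux_soft (lam i) t (w i) (z i) (hlam i) ht
      rw [hupd i]
      exact h
    calc ⟪w - p, z - p⟫
        = ∑ i, (w i - p i) * (z i - p i) := by
          simp [PiLp.inner_apply, RCLike.inner_apply, PiLp.sub_apply]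
          exact Finset.sum_congr rfl (fun i _ => mul_comm _ _)
      _ ≤ ∑ i, (t * (lam i * |z i|) - t * (lam i * |p i|)) :=
          Finset.sum_le_sum (fun i _ => step i)
      _ = t * (∑ i, lam i * |z i|) - t * (∑ i, lam i * |p i|) := by
          rw [Finset.sum_sub_distrib, ← Finset.mul_sum, ← Finset.mul_sum]
  have hflip : ⟪w - p, p - z⟫ = -⟪w - p, z - p⟫ := by
    rw [← inner_neg_right]; congr 1; abel
  have hsg2 : (∑ i, lam i * |p i|) - (∑ i, lam i * |z i|) ≤ t⁻¹ * ⟪w - p, p - z⟫ := by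
    rw [hflip]
    calc (∑ i, lam i * |p i|) - (∑ i, lam i * |z i|)
        = t⁻¹ * (t * ((∑ i, lam i * |p i|) - (∑ i, lam i * |z i|))) := by
          field_simp
      _ ≤ t⁻¹ * -⟪w - p, z - p⟫ := by
          apply mul_le_mul_of_nonneg_left _ (inv_nonneg.2 ht.le)
          nlinarith [hsg]
  rw [htinv] at hsg2
  have hsplit : ⟪mulVecE Mᵀ (mulVecE M y - b), p - y⟫ - ⟪mulVecE Mᵀ (mulVecE M y - b), z - y⟫
      = ⟪mulVecE Mᵀ (mulVecE M y - b), p - z⟫ := by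
    rw [← inner_sub_right]; congr 1; abel
  have hgpz : ⟪mulVecE Mᵀ (mulVecE M y - b), p - z⟫ = t⁻¹ * ⟪y - w, p - z⟫ := by
    rw [hgk, real_inner_smul_left]
  have hsum : ⟪y - w, p - z⟫ + ⟪w - p, p - z⟫ = ⟪y - p, p - z⟫ := by
    rw [← inner_add_left]; congr 1; abel
  have hcomb : ⟪mulVecE Mᵀ (mulVecE M y - b), p - y⟫ - ⟪mulVecE Mᵀ (mulVecE M y - b), z - y⟫
      + l2OpNorm (Mᵀ * M) * ⟪w - p, p - z⟫
      = l2OpNorm (Mᵀ * M) * ⟪y - p, p - z⟫ := by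
    rw [hsplit, hgpz, htinv, ← hsum]; ring
  have hnormid : l2OpNorm (Mᵀ * M)/2 * ‖y - z‖^2
      = l2OpNorm (Mᵀ * M)/2 * ‖y - p‖^2 + l2OpNorm (Mᵀ * M) * ⟪y - p, p - z⟫
        + l2OpNorm (Mᵀ * M)/2 * ‖p - z‖^2 := by
    have h := norm_add_sq_real (y - p) (p - z)
    rw [sub_add_sub_cancel] at h
    rw [h]; ring
  have hrev : ‖p - y‖^2 = ‖y - p‖^2 := by rw [norm_sub_rev]
  rw [hrev] at hs1
  simp only [objF]
  linarith [hq1, hq2, hs1, hs2, hsg2, hcomb, hnormid]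

lemma aux_conv {m n : ℕ} (M : Matrix (Fin m) (Fin n) ℝ) (b : EuclideanSpace ℝ (Fin m))
    (lam : Fin n → ℝ) (hlam : ∀ i, 0 ≤ lam i)
    (θ : ℝ) (a c : EuclideanSpace ℝ (Fin n)) (h0 : 0 ≤ θ) (h1 : θ ≤ 1) :
    objF M b lam ((1-θ) • a + θ • c) ≤ (1-θ) * objF M b lam a + θ * objF M b lam c := by
  simp only [objF]
  have hlin : mulVecE M ((1-θ) • a + θ • c) - b
      = (1-θ) • (mulVecE M a - b) + θ • (mulVecE M c - b) := by
    rw [aux_mulVecE_comb]; module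
  have hns := aux_normsq_comb θ (mulVecE M a - b) (mulVecE M c - b) h0 h1
  rw [hlin]
  have hg : (∑ i, lam i * |((1-θ) • a + θ • c) i|)
      ≤ (1-θ) * ∑ i, lam i * |a i| + θ * ∑ i, lam i * |c i| := by
    rw [Finset.mul_sum, Finset.mul_sum, ← Finset.sum_add_distrib]
    apply Finset.sum_le_sum
    intro i _
    have happ : ((1-θ) • a + θ • c) i = (1-θ) * a i + θ * c i := rfl
    rw [happ]
    have habs : |(1-θ) * a i + θ * c i| ≤ (1-θ) * |a i| + θ * |c i| := by
      calc |(1-θ) * a i + θ * c i| ≤ |(1-θ) * a i| + |θ * c i| := abs_add_le _ _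
        _ = (1-θ) * |a i| + θ * |c i| := by
          rw [abs_mul, abs_mul, abs_of_nonneg h0, abs_of_nonneg (by linarith)]
    nlinarith [mul_le_mul_of_nonneg_left habs (hlam i)]
  linarith [hns, hg]

end Aux

/-- Convergence of Nesterov's first method (fixed step `1/L`,
`γₖ = 2/(2+k)`) with explicit soft-thresholding proximal step for the wavelet
decomposition model `min (1/2)‖Md - b‖² + Σᵢ λᵢ|dᵢ|`. -/
theorem wavelet_nesterov_converge {m n : ℕ}
    (M : Matrix (Fin m) (Fin n) ℝ) (b : EuclideanSpace ℝ (Fin m))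
    (lam : Fin n → ℝ) (hlam : ∀ i, 0 ≤ lam i)
    (hL : 0 < l2OpNorm (Mᵀ * M))
    (t : ℝ) (htL : t = 1 / l2OpNorm (Mᵀ * M))
    (γ : ℕ → ℝ) (hγ : ∀ k : ℕ, γ k = 2 / (2 + (k : ℝ)))
    (x₀ : EuclideanSpace ℝ (Fin n)) (x y w : ℕ → EuclideanSpace ℝ (Fin n))
    (hx0 : x 0 = x₀) (hy0 : y 0 = x 0)
    (hy : ∀ k : ℕ,
      y (k + 1) = x (k + 1) + (γ (k + 1) * (1 - γ k) / γ k) • (x (k + 1) - x k))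
    (hw : ∀ k : ℕ, w k = y k - t • mulVecE Mᵀ (mulVecE M (y k) - b))
    (hupdate : ∀ (k : ℕ) (i : Fin n),
      x (k + 1) i = Real.sign (w k i) * max (|w k i| - t * lam i) 0)
    (xm : EuclideanSpace ℝ (Fin n))
    (hxm : IsMinOn
      (fun d => (1 / 2) * ‖mulVecE M d - b‖ ^ 2 + ∑ i, lam i * |d i|) Set.univ xm) :
    ∀ k : ℕ,
      ((1 / 2) * ‖mulVecE M (x (k + 1)) - b‖ ^ 2 + ∑ i, lam i * |x (k + 1) i|)
          - (1 / 2) * ‖mulVecE M xm - b‖ ^ 2 - ∑ i, lam i * |xm i|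
        ≤ 2 * l2OpNorm (Mᵀ * M) / ((k : ℝ) + 2) ^ 2 * ‖x₀ - xm‖ ^ 2 := by
  have ht : 0 < t := by rw [htL]; positivity
  have htinv : t⁻¹ = l2OpNorm (Mᵀ * M) := by rw [htL, one_div, inv_inv]
  have hFmin : ∀ d, objF M b lam xm ≤ objF M b lam d := fun d => hxm (Set.mem_univ d)
  have hγpos : ∀ k : ℕ, 0 < γ k := fun k => by rw [hγ]; positivity
  have hγ0 : γ 0 = 1 := by rw [hγ]; norm_num
  have hγle : ∀ k : ℕ, γ k ≤ 1 := fun k => by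
    rw [hγ, div_le_one (by positivity)]
    have : (0:ℝ) ≤ (k:ℝ) := Nat.cast_nonneg k
    linarith
  have key : ∀ (k : ℕ) (z : EuclideanSpace ℝ (Fin n)),
      objF M b lam (x (k+1)) - objF M b lam z
        ≤ l2OpNorm (Mᵀ * M)/2 * ‖y k - z‖^2 - l2OpNorm (Mᵀ * M)/2 * ‖x (k+1) - z‖^2 :=
    fun k z => aux_key M b lam hlam t ht htinv (y k) (w k) (x (k+1)) z (hw k) (hupdate k)
  have hconv : ∀ (θ : ℝ) (a c : EuclideanSpace ℝ (Fin n)), 0 ≤ θ → θ ≤ 1 →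
      objF M b lam ((1-θ) • a + θ • c) ≤ (1-θ) * objF M b lam a + θ * objF M b lam c :=
    fun θ a c h0 h1 => aux_conv M b lam hlam θ a c h0 h1
  -- the auxiliary sequence v
  obtain ⟨v, hv0, hv1⟩ : ∃ v : ℕ → EuclideanSpace ℝ (Fin n), v 0 = x₀ ∧
      ∀ j, v (j+1) = x j + (γ j)⁻¹ • (x (j+1) - x j) :=
    ⟨fun k => match k with
      | 0 => x₀
      | (j+1) => x j + (γ j)⁻¹ • (x (j+1) - x j), rfl, fun j => rfl⟩
  have hyv : ∀ k : ℕ, y k = (1 - γ k) • x k + γ k • v k := by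
    intro k
    cases k with
    | zero =>
      rw [hy0, hx0, hγ0, hv0]
      module
    | succ j =>
      rw [hy j, hv1 j]
      have hne : γ j ≠ 0 := (hγpos j).ne'
      match_scalars <;> (field_simp; try ring)
  -- MAIN RECURSION
  have hrec : ∀ k : ℕ, objF M b lam (x (k+1)) - objF M b lam xm
      ≤ (1 - γ k) * (objF M b lam (x k) - objF M b lam xm)
        + l2OpNorm (Mᵀ * M)/2 * (γ k)^2 * (‖v k - xm‖^2 - ‖v (k+1) - xm‖^2) := by
    intro k
    have hk := key k ((1 - γ k) • x k + γ k • xm)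
    have hc := hconv (γ k) (x k) xm (hγpos k).le (hγle k)
    have e1 : y k - ((1 - γ k) • x k + γ k • xm) = γ k • (v k - xm) := by
      rw [hyv k]; module
    have e2 : x (k+1) - ((1 - γ k) • x k + γ k • xm) = γ k • (v (k+1) - xm) := by
      rw [hv1 k]
      have hne : γ k ≠ 0 := (hγpos k).ne'
      match_scalars <;> (field_simp; try ring)
    have n1 : ‖y k - ((1 - γ k) • x k + γ k • xm)‖^2 = (γ k)^2 * ‖v k - xm‖^2 := by
      rw [e1, norm_smul, Real.norm_eq_abs, abs_of_pos (hγpos k), mul_pow]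
    have n2 : ‖x (k+1) - ((1 - γ k) • x k + γ k • xm)‖^2 = (γ k)^2 * ‖v (k+1) - xm‖^2 := by
      rw [e2, norm_smul, Real.norm_eq_abs, abs_of_pos (hγpos k), mul_pow]
    rw [n1, n2] at hk
    linarith [hk, hc]
  -- INDUCTION
  have hQ : ∀ k : ℕ, ((k:ℝ)+2)^2 * (objF M b lam (x (k+1)) - objF M b lam xm)
      + 2 * l2OpNorm (Mᵀ * M) * ‖v (k+1) - xm‖^2
      ≤ 2 * l2OpNorm (Mᵀ * M) * ‖x₀ - xm‖^2 := by
    intro k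
    induction k with
    | zero =>
      have h := hrec 0
      rw [hγ0, hv0] at h
      norm_num at h ⊢
      linarith [h]
    | succ j ih =>
      have h := hrec (j+1)
      have hγj : γ (j+1) = 2/((j:ℝ)+3) := by
        rw [hγ]; push_cast; ring_nf
      rw [hγj] at h
      have hc : (0:ℝ) < (j:ℝ)+3 := by positivity
      have hFnn : 0 ≤ objF M b lam (x (j+1)) - objF M b lam xm := by
        linarith [hFmin (x (j+1))]
      have h2 := mul_le_mul_of_nonneg_left h (le_of_lt (pow_pos hc 2))
      have h3 : ((j:ℝ)+3)^2 * ((1 - 2/((j:ℝ)+3)) * (objF M b lam (x (j+1)) - objF M b lam xm)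
            + l2OpNorm (Mᵀ * M)/2 * (2/((j:ℝ)+3))^2
              * (‖v (j+1) - xm‖^2 - ‖v (j+1+1) - xm‖^2))
          = (((j:ℝ)+3) * ((j:ℝ)+1)) * (objF M b lam (x (j+1)) - objF M b lam xm)
            + 2 * l2OpNorm (Mᵀ * M) * ‖v (j+1) - xm‖^2
            - 2 * l2OpNorm (Mᵀ * M) * ‖v (j+1+1) - xm‖^2 := by
        field_simp
        ring
      rw [h3] at h2
      push_cast
      push_cast at ih
      linarith [h2, ih, hFnn]
  -- CONCLUSION
  intro k
  have hq := hQ k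
  have hkpos : (0:ℝ) < ((k:ℝ)+2)^2 := by positivity
  have hB : 0 ≤ 2 * l2OpNorm (Mᵀ * M) * ‖v (k+1) - xm‖^2 :=
    mul_nonneg (by linarith) (sq_nonneg _)
  have hfin : objF M b lam (x (k+1)) - objF M b lam xm
      ≤ 2 * l2OpNorm (Mᵀ * M) / ((k:ℝ)+2)^2 * ‖x₀ - xm‖^2 := by
    rw [div_mul_eq_mul_div, le_div_iff₀ hkpos]
    linarith [hq, hB]
  simp only [objF] at hfin
  linarith [hfin]
end
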